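/- arXiv:1705.06018 — 2 statements merged into one kernel-verified Lean document; each statement's English description precedes it below -/
import Mathlib

section
/- For every positive integer n and every integer x, the formal power series identity e^{W(q)x}/(1-W(q))^n = \sum_{k\geq 0} ( \sum_{m=0}^{k} C(k-m+n-2, n-2) (k+x)^m/m! ) q^k holds, where W(q)=\sum_{n\geq 1} n^{n-1}q^n/n!. -/
/-!
Write `V x = ∑ (k + x)^k q^k / k!` and `T x = V x - q V (x + 1)`, whose coefficients are
`x (x + k)^(k-1) / k!`. Everything rests on Abel's identity `T x * V y = V (x + y)`. Its `k`-th
coefficient is a polynomial in `y` whose derivative is the `(k-1)`-st coefficient at `y + 1`, so by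
induction on `k` it suffices to compare both sides at `y = -x - k`. There the right side vanishes
and the left side is `1 - 1`: when `a + b + n = 0`, the `n`-th coefficient of `V a * V b` is
`∑_{i+j=n} (-1)^j (a + i)^n / (i! j!) = 1`, the `n`-th finite difference of `t ↦ t^n` over `n!`.
Abel's identity gives `T x * T y = T (x + y)`, and since `W = q T 1` also `W^i = q^i T i`; this
identifies `exp (x W)` with `T x` and `1 / (1 - W)` with `V 0`, and gives `W^i V x = q^i V (x + i)`.
Expanding `(1 - W)^(-(n-1))` as `∑ C(n-2+i, n-2) W^i` then yields the coefficients.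
-/

open PowerSeries Finset

/-- The tree function `W(q) = ∑_{n≥1} n^{n-1} q^n / n!`. -/
noncomputable def treeW (K : Type*) [Field K] : PowerSeries K :=
  PowerSeries.mk fun n => if n = 0 then 0 else (n : K) ^ (n - 1) / (n.factorial : K)

/-- Formal exponential of a power series with zero constant term. -/
noncomputable def pexp {K : Type*} [Field K] (f : PowerSeries K) : PowerSeries K :=
  PowerSeries.mk fun n => ∑ k ∈ Finset.range (n + 1), PowerSeries.coeff (R := K) n (f ^ k) / (k.factorial : K)

/-- Binomial coefficient with the paper's convention: `1` if `α = β`, `0` if `α < β`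
or (`α > β` and `β < 0`), and the usual binomial coefficient when `α ≥ β ≥ 0`. -/
def bino (α β : ℤ) : ℚ :=
  if α = β then 1 else if α < β ∨ β < 0 then 0 else (α.toNat.choose β.toNat : ℚ)

open scoped Nat

theorem sum_antidiagonal_neg_one_pow_mul_pow_div_factorial {K : Type*} [Field K] [CharZero K]
    (y : K) (n : ℕ) :
    ∑ p ∈ antidiagonal n, (-1) ^ p.2 * (y + p.1) ^ n / (p.1 ! * p.2 !) = 1 := by
  have hn : (n ! : K) ≠ 0 := Nat.cast_ne_zero.mpr n.factorial_ne_zero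
  have h := fwdDiff_iter_eq_sum_shift (h := (1 : K)) (fun r => r ^ n) n y
  rw [fwdDiff_iter_eq_factorial, Pi.natCast_apply] at h
  rw [Nat.sum_antidiagonal_eq_sum_range_succ_mk]
  calc ∑ k ∈ range (n + 1), (-1) ^ (n - k) * (y + k) ^ n / (k ! * (n - k)! : K)
      = (∑ k ∈ range (n + 1), ((-1 : ℤ) ^ (n - k) * n.choose k) • (y + k • (1 : K)) ^ n) / n ! := by
        rw [sum_div]
        refine sum_congr rfl fun k hk => ?_
        simp only [zsmul_eq_mul, nsmul_eq_mul, mul_one]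
        push_cast
        rw [Nat.cast_choose K (Nat.lt_succ_iff.mp (mem_range.mp hk))]
        field_simp
    _ = 1 := by rw [← h, div_self hn]

theorem sum_antidiagonal_pow_div_factorial_mul {K : Type*} [Field K] [CharZero K] (a b : K)
    (n : ℕ) : ∑ p ∈ antidiagonal n, a ^ p.1 / p.1 ! * (b ^ p.2 / p.2 !) = (a + b) ^ n / n ! := by
  simpa [coeff_mul, coeff_rescale, coeff_exp, div_eq_mul_inv, mul_comm, mul_left_comm]
    using congrArg (coeff n) (exp_mul_exp_eq_exp_add a b)

theorem Polynomial.eq_of_derivative_eq_of_eval_eq {R : Type*} [Ring R] [IsAddTorsionFree R]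
    {p q : Polynomial R} (h : Polynomial.derivative p = Polynomial.derivative q)
    (a : R) (ha : p.eval a = q.eval a) : p = q := by
  have hc := Polynomial.eq_C_of_derivative_eq_zero (p := p - q) (by rw [map_sub, h, sub_self])
  have h0 : (p - q).coeff 0 = 0 := by
    simpa [ha] using (congrArg (Polynomial.eval a) hc).symm
  rwa [h0, map_zero, sub_eq_zero] at hc

theorem PowerSeries.coeff_subst_eq_sum_range {R : Type*} [CommRing R] {w : R⟦X⟧}
    (hw : constantCoeff w = 0) (g : R⟦X⟧) {k N : ℕ} (hk : k < N) :
    coeff k (subst w g) = ∑ i ∈ range N, coeff i g * coeff k (w ^ i) := by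
  rw [coeff_subst' (HasSubst.of_constantCoeff_zero' hw)]
  refine finsum_eq_sum_of_support_subset _ fun i hi => mem_range.mpr ?_
  by_contra hiN
  have hwi : X ^ i ∣ w ^ i := pow_dvd_pow_of_dvd (X_dvd_iff.mpr hw) i
  exact hi (show coeff i g • coeff k (w ^ i) = 0 by
    rw [X_pow_dvd_iff.mp hwi k (by omega), smul_zero])

theorem PowerSeries.coeff_mul_subst {R : Type*} [CommRing R] {w : R⟦X⟧}
    (hw : constantCoeff w = 0) (f g : R⟦X⟧) (k : ℕ) :
    coeff k (f * subst w g) = ∑ i ∈ range (k + 1), coeff i g * coeff k (f * w ^ i) := by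
  have hp : ∀ p ∈ antidiagonal k, coeff p.1 f * coeff p.2 (subst w g) =
      ∑ i ∈ range (k + 1), coeff i g * (coeff p.1 f * coeff p.2 (w ^ i)) := by
    intro p hp
    rw [coeff_subst_eq_sum_range hw g (Nat.antidiagonal.snd_lt hp), mul_sum]
    exact sum_congr rfl fun _ _ => by ring
  rw [coeff_mul]
  simp_rw [sum_congr rfl hp, coeff_mul, mul_sum]
  exact sum_comm

-- At `m = 0` this is the convention `bino (i - 1) (-1) = if i = 0 then 1 else 0`.
theorem coeff_invOneSubPow (m i : ℕ) :
    coeff i (invOneSubPow ℚ m).val = bino ((m : ℤ) - 1 + i) ((m : ℤ) - 1) := by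
  rcases m with _ | d
  · rcases i with _ | i
    · simp [invOneSubPow_zero, bino]
    · rw [invOneSubPow_zero, Units.val_one, coeff_one, if_neg i.succ_ne_zero, bino,
        if_neg (by omega), if_pos (Or.inr (by omega))]
  · rw [invOneSubPow_val_succ_eq_mk_add_choose, coeff_mk, bino]
    push_cast
    rw [add_sub_cancel_right]
    rcases i with _ | i
    · simp
    · rw [if_neg (by omega), if_neg (by omega)]
      norm_cast

namespace TreeFunction

open scoped Polynomial

variable {K : Type*} [Field K]

noncomputable def V (x : K) : K⟦X⟧ := mk fun k => ((k : K) + x) ^ k / k !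

noncomputable def T (x : K) : K⟦X⟧ := V x - X * V (x + 1)

theorem coeff_V (k : ℕ) (x : K) : coeff k (V x) = ((k : K) + x) ^ k / k ! := coeff_mk _ _

theorem constantCoeff_treeW : constantCoeff (treeW K) = 0 := by
  simp [treeW]

noncomputable def vPoly (j : ℕ) : K[X] :=
  Polynomial.C (j ! : K)⁻¹ * (Polynomial.X + Polynomial.C (j : K)) ^ j

theorem eval_vPoly (j : ℕ) (y : K) : (vPoly j).eval y = coeff j (V y) := by
  simp [vPoly, coeff_V, add_comm, div_eq_inv_mul]

noncomputable def coeffMulV (f : K⟦X⟧) (k : ℕ) : K[X] :=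
  ∑ p ∈ antidiagonal k, Polynomial.C (coeff p.1 f) * vPoly p.2

theorem eval_coeffMulV (f : K⟦X⟧) (k : ℕ) (y : K) :
    (coeffMulV f k).eval y = coeff k (f * V y) := by
  simp [coeffMulV, Polynomial.eval_finsetSum, eval_vPoly, coeff_mul]

variable [CharZero K]

theorem derivative_vPoly_succ (j : ℕ) :
    Polynomial.derivative (vPoly (j + 1) : K[X]) = (vPoly j).comp (Polynomial.X + 1) := by
  have h : ((j + 1)! : K)⁻¹ * (j + 1) = (j ! : K)⁻¹ := by
    rw [Nat.factorial_succ]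
    push_cast
    field_simp [Nat.cast_ne_zero.mpr j.factorial_ne_zero]
  simp only [vPoly, Polynomial.derivative_C_mul, Polynomial.derivative_X_add_C_pow,
    Polynomial.mul_comp, Polynomial.C_comp, Polynomial.pow_comp, Polynomial.add_comp,
    Polynomial.X_comp]
  rw [← mul_assoc, ← Polynomial.C_mul, add_tsub_cancel_right]
  push_cast
  rw [h, Polynomial.C_add, map_one]
  ring

theorem derivative_coeffMulV_succ (f : K⟦X⟧) (k : ℕ) :
    Polynomial.derivative (coeffMulV f (k + 1)) = (coeffMulV f k).comp (Polynomial.X + 1) := by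
  have h0 : Polynomial.derivative (vPoly 0 : K[X]) = 0 := by simp [vPoly]
  simp only [coeffMulV, Nat.sum_antidiagonal_succ', map_add, map_sum, Polynomial.derivative_C_mul,
    h0, mul_zero, zero_add, derivative_vPoly_succ]
  rw [← Polynomial.coe_compRingHom_apply, map_sum]
  simp [Polynomial.coe_compRingHom_apply]

theorem coeff_V_mul_V_of_add_eq_zero {x y : K} {n : ℕ} (h : x + y + n = 0) :
    coeff n (V x * V y) = 1 := by
  rw [coeff_mul, ← sum_antidiagonal_neg_one_pow_mul_pow_div_factorial x n]
  refine sum_congr rfl fun p hp => ?_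
  have hy : (p.2 : K) + y = -(x + p.1) := by
    rw [← mem_antidiagonal.mp hp] at h
    push_cast at h
    linear_combination h
  rw [coeff_V, coeff_V, hy, neg_pow, add_comm (p.1 : K), ← mem_antidiagonal.mp hp, pow_add]
  ring

theorem coeffMulV_T (x : K) (k : ℕ) :
    coeffMulV (T x) k = (vPoly k).comp (Polynomial.X + Polynomial.C x) := by
  induction k with
  | zero => simp [coeffMulV, vPoly, T, coeff_V]
  | succ k ih =>
    refine Polynomial.eq_of_derivative_eq_of_eval_eq ?_ (-(x + (k + 1))) ?_
    · rw [derivative_coeffMulV_succ, ih, Polynomial.derivative_comp, derivative_vPoly_succ]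
      simp only [Polynomial.comp_assoc, Polynomial.derivative_add, Polynomial.derivative_X,
        Polynomial.derivative_C, add_zero, Polynomial.add_comp, Polynomial.X_comp,
        Polynomial.C_comp, Polynomial.one_comp]
      ring_nf
    · rw [eval_coeffMulV, Polynomial.eval_comp, eval_vPoly, T, sub_mul, mul_assoc, map_sub,
        coeff_succ_X_mul, coeff_V_mul_V_of_add_eq_zero (by push_cast; ring),
        coeff_V_mul_V_of_add_eq_zero (by ring)]
      simp [coeff_V]

theorem T_mul_V (x y : K) : T x * V y = V (x + y) := by
  ext k
  rw [← eval_coeffMulV, coeffMulV_T]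
  simp [eval_vPoly, add_comm]

theorem T_mul_T (x y : K) : T x * T y = T (x + y) := by
  rw [show T y = V y - X * V (y + 1) from rfl, mul_sub, T_mul_V, mul_left_comm, T_mul_V,
    ← add_assoc]
  rfl

theorem coeff_zero_T (x : K) : coeff 0 (T x) = 1 := by
  rw [T, map_sub, coeff_zero_X_mul, coeff_V]
  simp

theorem coeff_succ_T (k : ℕ) (x : K) : coeff (k + 1) (T x) = x * (k + 1 + x) ^ k / (k + 1)! := by
  rw [T, map_sub, coeff_succ_X_mul, coeff_V, coeff_V, Nat.factorial_succ]
  push_cast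
  field_simp [Nat.cast_ne_zero.mpr k.factorial_ne_zero]
  ring

theorem T_zero : T (0 : K) = 1 := by
  ext (_ | k)
  · simp [coeff_zero_T]
  · simp [coeff_succ_T]

theorem X_mul_T_one : X * T (1 : K) = treeW K := by
  ext (_ | k)
  · simp [treeW]
  rw [coeff_succ_X_mul, treeW, coeff_mk, if_neg k.succ_ne_zero]
  rcases k with _ | k
  · simp [coeff_zero_T]
  · have h2 : ((k + 1 + 1 : ℕ) : K) ≠ 0 := Nat.cast_ne_zero.mpr (k + 1).succ_ne_zero
    rw [coeff_succ_T, Nat.factorial_succ (k + 1)]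
    push_cast at h2 ⊢
    field_simp [Nat.cast_ne_zero.mpr (k + 1).factorial_ne_zero]
    ring

theorem treeW_pow (i : ℕ) : treeW K ^ i = X ^ i * T (i : K) := by
  induction i with
  | zero => simp [T_zero]
  | succ i ih =>
    rw [pow_succ, ih, ← X_mul_T_one, mul_mul_mul_comm, ← pow_succ, T_mul_T, Nat.cast_succ]

theorem V_mul_treeW_pow (x : K) (i : ℕ) : V x * treeW K ^ i = X ^ i * V (x + i) := by
  rw [treeW_pow, mul_left_comm, mul_comm (V x), T_mul_V, add_comm]

theorem one_sub_treeW_mul_V (x : K) : (1 - treeW K) * V x = T x := by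
  rw [← X_mul_T_one, sub_mul, one_mul, mul_assoc, T_mul_V, add_comm, T]

theorem inv_one_sub_treeW : (1 - treeW K)⁻¹ = V 0 := by
  rw [PowerSeries.inv_eq_iff_mul_eq_one (by simp [constantCoeff_treeW]), mul_comm,
    one_sub_treeW_mul_V, T_zero]

theorem sum_antidiagonal_pow_div_factorial_mul_coeff_V (x c : K) (n : ℕ) :
    ∑ p ∈ antidiagonal n, x ^ p.1 / p.1 ! * coeff p.2 (V (p.1 + c)) = coeff n (V (x + c)) := by
  rw [coeff_V, add_left_comm, ← sum_antidiagonal_pow_div_factorial_mul]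
  refine sum_congr rfl fun p hp => ?_
  rw [coeff_V, ← add_assoc, add_comm (p.2 : K), ← Nat.cast_add, mem_antidiagonal.mp hp]

theorem pexp_smul_treeW (x : K) : pexp (x • treeW K) = T x := by
  ext n
  have hshift : ∑ p ∈ antidiagonal n, x ^ p.1 / p.1 ! * coeff p.2 (X * V ((p.1 : K) + 1)) =
      coeff n (X * V (x + 1)) := by
    rcases n with _ | n
    · simp
    · rw [Nat.sum_antidiagonal_succ', coeff_succ_X_mul, coeff_zero_X_mul, mul_zero, zero_add,
        ← sum_antidiagonal_pow_div_factorial_mul_coeff_V]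
      simp only [coeff_succ_X_mul]
  calc coeff n (pexp (x • treeW K))
      = ∑ p ∈ antidiagonal n, x ^ p.1 / p.1 ! * coeff p.2 (T (p.1 : K)) := by
        rw [pexp, coeff_mk, Nat.sum_antidiagonal_eq_sum_range_succ_mk]
        refine sum_congr rfl fun k hk => ?_
        rw [smul_pow, treeW_pow, map_smul, coeff_X_pow_mul',
          if_pos (Nat.lt_succ_iff.mp (mem_range.mp hk)), smul_eq_mul]
        ring
    _ = ∑ p ∈ antidiagonal n, x ^ p.1 / p.1 ! * coeff p.2 (V ((p.1 : K) + 0)) -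
          ∑ p ∈ antidiagonal n, x ^ p.1 / p.1 ! * coeff p.2 (X * V ((p.1 : K) + 1)) := by
        simp only [T, add_zero, map_sub, mul_sub, sum_sub_distrib]
    _ = coeff n (T x) := by
        rw [sum_antidiagonal_pow_div_factorial_mul_coeff_V, hshift, add_zero, T, map_sub]

theorem V_zero_pow (m : ℕ) : V (0 : K) ^ m = subst (treeW K) (invOneSubPow K m).val := by
  have hW := HasSubst.of_constantCoeff_zero' (constantCoeff_treeW (K := K))
  have hinv : subst (treeW K) (invOneSubPow K m).val * (1 - treeW K) ^ m = 1 := by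
    have h := congrArg (substAlgHom (R := K) hW) (invOneSubPow K m).val_inv
    rwa [invOneSubPow_inv_eq_one_sub_pow, map_mul, map_pow, map_sub, map_one, coe_substAlgHom,
      subst_X hW] at h
  have hV : (1 - treeW K) ^ m * V 0 ^ m = 1 := by
    rw [← mul_pow, one_sub_treeW_mul_V, T_zero, one_pow]
  exact (left_inv_eq_right_inv hinv hV).symm

end TreeFunction

open TreeFunction

theorem stmt6 (n : ℕ) (hn : 1 ≤ n) (x : ℤ) :
    pexp ((x : ℚ) • treeW ℚ) * ((1 - treeW ℚ)⁻¹) ^ n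
      = PowerSeries.mk fun k => ∑ m ∈ Finset.range (k + 1),
          bino ((k : ℤ) - (m : ℤ) + (n : ℤ) - 2) ((n : ℤ) - 2)
            * ((k : ℚ) + (x : ℚ)) ^ m / (m.factorial : ℚ) := by
  obtain ⟨n, rfl⟩ : ∃ m, n = m + 1 := ⟨n - 1, by omega⟩
  rw [pexp_smul_treeW, inv_one_sub_treeW, pow_succ', ← mul_assoc, T_mul_V, add_zero, V_zero_pow]
  ext k
  rw [coeff_mk, coeff_mul_subst constantCoeff_treeW, ← sum_range_reflect]
  refine sum_congr rfl fun m hm => ?_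
  have hmk : m ≤ k := Nat.lt_succ_iff.mp (mem_range.mp hm)
  rw [add_tsub_cancel_right, V_mul_treeW_pow, coeff_X_pow_mul', if_pos (Nat.sub_le k m),
    Nat.sub_sub_self hmk, coeff_V, coeff_invOneSubPow]
  push_cast [Nat.cast_sub hmk]
  ring_nf
end

section
/- As formal power series, the series \sum_{n\geq 1} (n^{n+1}/n!) (x + n)^{k} q^n equals (q d/dq + x)^{k} applied to (q d/dq)(1/(1-W(q))), for every nonnegative integer k and real x, where W is the tree function; moreover q d/dq = (W/(1-W)) d/dW under the substitution q = W e^{-W}. -/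
/-!
The operator `q d/dq + x` multiplies the `n`-th coefficient by `x + n`, so everything reduces to
`1/(1 - W) = ∑ n^n qⁿ/n!`, i.e. to Abel's identity `∑_{i<n} C(n,i) (n-i)^(n-i-1) i^i = n^n`.
We prove its polynomial form `∑_{i<n} C(n,i) (n-i)^(n-i-1) (y+i)^i = n (y+n)^(n-1)` by induction
on `n`: the derivatives in `y` agree by the induction hypothesis, and at `y = -n` the left side
is the `n`-th finite difference of `k ↦ k^(n-1)`, hence zero. The second claim follows from
`q W' = ∑_{n≥1} n^n qⁿ/n! = 1/(1 - W) - 1 = W/(1 - W)`.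
-/

open PowerSeries Finset

theorem sum_range_neg_one_pow_mul_choose_mul_pow_eq_zero (R : Type*) [CommRing R] {m n : ℕ}
    (h : m < n) : ∑ k ∈ range (n + 1), (-1 : R) ^ (n - k) * n.choose k * (k : R) ^ m = 0 := by
  have := congrFun (fwdDiff_iter_pow_eq_zero_of_lt (R := R) h) 0
  rw [fwdDiff_iter_eq_sum_shift] at this
  simpa [zsmul_eq_mul] using this

namespace Polynomial

theorem eq_of_derivative_eq_of_eval_eq_s17 {R : Type*} [Ring R] [IsAddTorsionFree R]
    {p q : R[X]} (a : R) (hd : derivative p = derivative q) (ha : p.eval a = q.eval a) :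
    p = q := by
  have hC := eq_C_of_derivative_eq_zero (p := p - q) (by rw [derivative_sub, hd, sub_self])
  have h0 : (p - q).coeff 0 = 0 := by simpa [ha] using (congrArg (eval a) hC).symm
  rwa [h0, map_zero, sub_eq_zero] at hC

noncomputable def abelPoly (n : ℕ) : ℤ[X] :=
  ∑ i ∈ range n, ((n.choose i * (n - i) ^ (n - i - 1) : ℕ) : ℤ[X]) * (X + (i : ℤ[X])) ^ i

theorem eval_abelPoly_succ {m : ℕ} (hm : 0 < m) :
    eval (-(m + 1 : ℤ)) (abelPoly (m + 1)) = 0 := by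
  have alt := sum_range_neg_one_pow_mul_choose_mul_pow_eq_zero ℤ (Nat.lt_succ_self m)
  rw [← sum_range_reflect, sum_range_succ] at alt
  simp only [add_tsub_cancel_right, Nat.sub_self, Nat.cast_zero, zero_pow hm.ne', mul_zero,
    add_zero] at alt
  rw [abelPoly, eval_finsetSum, ← alt]
  refine sum_congr rfl fun j hj => ?_
  have hj : j ≤ m := Nat.lt_succ_iff.mp (mem_range.mp hj)
  rw [Nat.choose_symm (by omega), show m + 1 - (m + 1 - j) = j by omega,
    show m + 1 - j - 1 = m - j by omega]
  simp only [eval_mul, eval_natCast, eval_pow, eval_add, eval_X, Nat.cast_mul, Nat.cast_pow]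
  rw [show (-(m + 1 : ℤ) + j) = -1 * ((m + 1 - j : ℕ) : ℤ) by
    push_cast [hj.trans (Nat.le_succ m)]; ring]
  have hpow : ((m + 1 - j : ℕ) : ℤ) ^ (m - j) * ((m + 1 - j : ℕ) : ℤ) ^ j
      = ((m + 1 - j : ℕ) : ℤ) ^ m := by
    rw [← pow_add, Nat.sub_add_cancel hj]
  rw [mul_pow]
  linear_combination ((-1) ^ j * ((m + 1).choose j : ℤ)) * hpow

theorem derivative_abelPoly_succ (n : ℕ) :
    derivative (abelPoly (n + 1)) = (n + 1) * (abelPoly n).comp (X + 1) := by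
  rw [abelPoly, abelPoly, derivative_sum, sum_range_succ', Polynomial.sum_comp, mul_sum]
  simp only [derivative_natCast_mul, derivative_pow, derivative_add, derivative_X,
    derivative_natCast, add_zero, mul_one, pow_zero, natCast_mul_comp, pow_comp, add_comp, X_comp,
    natCast_comp, add_tsub_cancel_right, Nat.add_sub_add_right, map_natCast]
  refine sum_congr rfl fun i _ => ?_
  have hchoose : ((n + 1).choose (i + 1) * (i + 1) : ℤ[X]) = (n + 1) * n.choose i := by
    exact_mod_cast (Nat.add_one_mul_choose_eq n i).symm
  push_cast
  linear_combination (((n - i : ℕ) : ℤ[X]) ^ (n - i - 1) * (X + 1 + (i : ℤ[X])) ^ i) * hchoose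

theorem abelPoly_eq (n : ℕ) : abelPoly n = (n : ℤ[X]) * (X + (n : ℤ[X])) ^ (n - 1) := by
  induction n with
  | zero => simp [abelPoly]
  | succ n ih =>
    rcases Nat.eq_zero_or_pos n with rfl | hn
    · simp [abelPoly]
    refine eq_of_derivative_eq_of_eval_eq_s17 (-(n + 1 : ℤ)) ?_ ?_
    · rw [derivative_abelPoly_succ, ih]
      simp only [natCast_mul_comp, pow_comp, add_comp, X_comp, natCast_comp, derivative_natCast_mul,
        derivative_pow, derivative_add, derivative_X, derivative_natCast, add_zero, mul_one,
        add_tsub_cancel_right, map_natCast]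
      push_cast
      ring
    · rw [eval_abelPoly_succ hn]
      simp [hn.ne']

end Polynomial

theorem sum_range_choose_mul_pow_mul_pow_self {n : ℕ} (hn : 0 < n) :
    ∑ i ∈ range n, n.choose i * (n - i) ^ (n - i - 1) * i ^ i = n ^ n := by
  have h := congrArg (Polynomial.eval 0) (Polynomial.abelPoly_eq n)
  simp only [Polynomial.abelPoly, Polynomial.eval_finsetSum, Polynomial.eval_mul,
    Polynomial.eval_natCast, Polynomial.eval_pow, Polynomial.eval_add, Polynomial.eval_X,
    zero_add] at h
  rw [← pow_succ', Nat.sub_add_cancel hn] at h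
  exact_mod_cast h

open scoped Nat

theorem sum_range_pow_self_div_factorial_mul (K : Type*) [Field K] [CharZero K] {n : ℕ}
    (hn : 0 < n) :
    ∑ i ∈ range n, (i : K) ^ i / i ! * (((n - i : ℕ) : K) ^ (n - i - 1) / (n - i)!) =
      (n : K) ^ n / n ! := by
  rw [eq_div_iff (by exact_mod_cast n.factorial_ne_zero), sum_mul, ← Nat.cast_pow,
    ← sum_range_choose_mul_pow_mul_pow_self hn]
  push_cast
  refine sum_congr rfl fun i hi => ?_
  rw [Nat.cast_choose K (mem_range.mp hi).le]
  field_simp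

noncomputable def selfPowSeries (K : Type*) [Field K] : K⟦X⟧ :=
  mk fun n => (n : K) ^ n / n !

theorem PowerSeries.coeff_X_mul_derivative {R : Type*} [CommSemiring R] (f : R⟦X⟧) (n : ℕ) :
    coeff n (X * d⁄dX R f) = n * coeff n f := by
  rcases n with _ | n
  · simp
  · rw [coeff_succ_X_mul, coeff_derivative, mul_comm]
    push_cast
    rfl

theorem PowerSeries.coeff_iterate_of_coeff_eq_mul {R : Type*} [CommSemiring R]
    {T : R⟦X⟧ → R⟦X⟧} {c : ℕ → R} (hT : ∀ f n, coeff n (T f) = c n * coeff n f) (k : ℕ)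
    (f : R⟦X⟧) (n : ℕ) : coeff n (T^[k] f) = c n ^ k * coeff n f := by
  induction k with
  | zero => simp
  | succ k ih => rw [Function.iterate_succ_apply', hT, ih, pow_succ', mul_assoc]

theorem PowerSeries.coeff_X_mul_derivative_add_smul {R : Type*} [CommSemiring R] (x : R)
    (f : R⟦X⟧) (n : ℕ) : coeff n (X * d⁄dX R f + x • f) = (x + n) * coeff n f := by
  rw [map_add, coeff_X_mul_derivative, coeff_smul, smul_eq_mul, add_mul, add_comm]

theorem X_mul_derivative_selfPowSeries (K : Type*) [Field K] :
    X * d⁄dX K (selfPowSeries K) = mk fun n => (n : K) ^ (n + 1) / n ! := by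
  ext n
  rw [coeff_X_mul_derivative, selfPowSeries, coeff_mk, coeff_mk]
  ring

section TreeFunction

variable (K : Type*) [Field K] [CharZero K]

theorem selfPowSeries_mul_treeW : selfPowSeries K * treeW K = selfPowSeries K - 1 := by
  ext n
  rw [coeff_mul, Nat.sum_antidiagonal_eq_sum_range_succ
    (fun i j => coeff i (selfPowSeries K) * coeff j (treeW K)), sum_range_succ]
  rcases Nat.eq_zero_or_pos n with rfl | hn
  · simp [selfPowSeries, treeW]
  rw [map_sub, coeff_one, if_neg hn.ne', sub_zero]
  simp only [selfPowSeries, treeW, coeff_mk, Nat.sub_self, if_true, mul_zero, add_zero]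
  rw [← sum_range_pow_self_div_factorial_mul K hn]
  refine sum_congr rfl fun i hi => ?_
  rw [if_neg (Nat.sub_ne_zero_of_lt (mem_range.mp hi))]

theorem inv_one_sub_treeW : (1 - treeW K)⁻¹ = selfPowSeries K := by
  refine ((eq_inv_iff_mul_eq_one ?_).mpr ?_).symm
  · simp [treeW, ← coeff_zero_eq_constantCoeff_apply, -coeff_zero_eq_constantCoeff]
  · rw [mul_sub, mul_one, selfPowSeries_mul_treeW, sub_sub_cancel]

theorem X_mul_derivative_treeW : X * d⁄dX K (treeW K) = treeW K * (1 - treeW K)⁻¹ := by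
  rw [inv_one_sub_treeW, mul_comm (treeW K), selfPowSeries_mul_treeW]
  ext n
  rw [coeff_X_mul_derivative, map_sub, coeff_one]
  rcases n with _ | n
  · simp [selfPowSeries]
  · simp only [treeW, selfPowSeries, coeff_mk, if_neg n.succ_ne_zero, sub_zero,
      Nat.add_sub_cancel]
    push_cast
    ring

theorem iterate_X_mul_derivative_add_smul_inv_one_sub_treeW (x : K) (k : ℕ) :
    (fun f => X * d⁄dX K f + x • f)^[k] (X * d⁄dX K (1 - treeW K)⁻¹) =
      mk fun n => (n : K) ^ (n + 1) / n ! * (x + n) ^ k := by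
  ext n
  rw [coeff_iterate_of_coeff_eq_mul (coeff_X_mul_derivative_add_smul x), inv_one_sub_treeW,
    X_mul_derivative_selfPowSeries, coeff_mk, coeff_mk, mul_comm]

end TreeFunction

theorem stmt17 (k : ℕ) (x : ℝ) :
    (PowerSeries.mk fun n =>
        if n = 0 then 0 else (n : ℝ) ^ (n + 1) / (n.factorial : ℝ) * (x + n) ^ k)
      = (fun f => PowerSeries.X * PowerSeries.derivativeFun f + x • f)^[k]
          (PowerSeries.X * PowerSeries.derivativeFun ((1 - treeW ℝ)⁻¹))
    ∧ PowerSeries.X * PowerSeries.derivativeFun (treeW ℝ) = treeW ℝ * (1 - treeW ℝ)⁻¹ := by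
  -- `derivativeFun f` is definitionally `d⁄dX ℝ f`.
  refine ⟨Eq.trans ?_ (iterate_X_mul_derivative_add_smul_inv_one_sub_treeW ℝ x k).symm,
    X_mul_derivative_treeW ℝ⟩
  ext n
  rcases n with _ | n <;> simp
end
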